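/- Let f, g, f_n, g_n ∈ 𝒟 for n ∈ ℕ be such that f_n → f and g_n → g uniformly on [0,1] and g_n ◁ f_n for all n. Then either f = g or g ◁ f. -/

import Mathlib

open Set MeasureTheory Filter intervalIntegral

noncomputable section

/-- The class ℰ of decreasing functions `f : [0,1] → [0,1]` with `f 0 = 1` and positive area. -/
def MemE (f : ℝ → ℝ) : Prop :=
  (∀ x ∈ Icc (0:ℝ) 1, f x ∈ Icc (0:ℝ) 1) ∧
  AntitoneOn f (Icc 0 1) ∧ f 0 = 1 ∧ 0 < ∫ x in (0:ℝ)..1, f x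

/-- Pseudo-inverse: `f* y = sup {x ∈ [0,1] | f x ≥ y}`. -/
def pseudoInv (f : ℝ → ℝ) (y : ℝ) : ℝ :=
  sSup {x | x ∈ Icc (0:ℝ) 1 ∧ y ≤ f x}

/-- The operator `T`: `(Tf)(x) = (∫ₓ¹ f*) / (∫₀¹ f)`. -/
def Tmap (f : ℝ → ℝ) : ℝ → ℝ :=
  fun x => (∫ y in x..1, pseudoInv f y) / ∫ t in (0:ℝ)..1, f t

/-- The operator `I`: `(Ig)(x) = (∫ₓ¹ g) / (∫₀¹ g)`. -/
def Imap (g : ℝ → ℝ) : ℝ → ℝ :=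
  fun x => (∫ t in x..1, g t) / ∫ t in (0:ℝ)..1, g t

/-- The class 𝒞: continuous members of ℰ vanishing at 1. -/
def MemC (f : ℝ → ℝ) : Prop := MemE f ∧ ContinuousOn f (Icc 0 1) ∧ f 1 = 0

/-- The class 𝒞̆: convex members of 𝒞. -/
def MemCconv (f : ℝ → ℝ) : Prop := MemC f ∧ ConvexOn ℝ (Icc 0 1) f

/-- The class 𝒟: strictly decreasing members of 𝒞. -/
def MemD (f : ℝ → ℝ) : Prop := MemC f ∧ StrictAntiOn f (Icc 0 1)

/-- The class 𝒟̆ = 𝒟 ∩ 𝒞̆. -/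
def MemDconv (f : ℝ → ℝ) : Prop := MemD f ∧ ConvexOn ℝ (Icc 0 1) f

/-- The stride `σ g = sup {α ≥ 0 | α - x ≤ α * g x for all x ∈ [0,1]}`. -/
def stride (g : ℝ → ℝ) : ℝ :=
  sSup {α : ℝ | 0 ≤ α ∧ ∀ x ∈ Icc (0:ℝ) 1, α - x ≤ α * g x}

/-- The class 𝒦. -/
def MemK (g : ℝ → ℝ) : Prop :=
  MemCconv g ∧ 1/5 ≤ stride g ∧ 1/5 ≤ ∫ x in (0:ℝ)..1, g x

/-- `[c,d] ⊆ [0,ℓ]` is a sign switch of `Δ`. -/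
def SignSwitch (Δ : ℝ → ℝ) (ℓ c d : ℝ) : Prop :=
  0 < c ∧ c ≤ d ∧ d < ℓ ∧ (∀ x ∈ Icc c d, Δ x = 0) ∧
  ∃ δ : ℝ, 0 < δ ∧ δ ≤ min c (ℓ - d) ∧
    ∀ x : ℝ, 0 < x → x ≤ δ → Δ (c - x) * Δ (d + x) < 0

/-- `χΔ`: the number of sign switches of `Δ` on `[0,ℓ]`, in `ℕ∞`. -/
def nSwitch (Δ : ℝ → ℝ) (ℓ : ℝ) : ℕ∞ :=
  {p : ℝ × ℝ | SignSwitch Δ ℓ p.1 p.2}.encard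

/-- The crossing number `χ(f,g) = sup {χ(f(a·) - b g) : a, b > 0}`. -/
def crossNum (f g : ℝ → ℝ) : ℕ∞ :=
  ⨆ a ∈ Set.Ioi (0:ℝ), ⨆ b ∈ Set.Ioi (0:ℝ),
    nSwitch (fun x => f (a * x) - b * g x) (min 1 (1/a))

/-- `Dominates f g` means `f` dominates `g`, written `g ◁ f`. -/
def Dominates (f g : ℝ → ℝ) : Prop :=
  crossNum f g = 2 ∧ ∀ x ∈ Icc (0:ℝ) 1, g x ≤ f x

private lemma exists_zero {Δ : ℝ → ℝ} {p q : ℝ} (hpq : p ≤ q)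
    (hc : ContinuousOn Δ (Icc p q)) (hs : Δ p * Δ q < 0) :
    ∃ z ∈ Icc p q, Δ z = 0 := by
  rcases lt_or_ge (Δ p) 0 with h1 | h1
  · have h2 : 0 < Δ q := by nlinarith
    have : (0:ℝ) ∈ Icc (Δ p) (Δ q) := ⟨h1.le, h2.le⟩
    obtain ⟨z, hz, hz0⟩ := intermediate_value_Icc hpq hc this
    exact ⟨z, hz, hz0⟩
  · have h1' : 0 < Δ p := by
      rcases h1.lt_or_eq with h | h
      · exact h
      · exfalso; rw [← h] at hs; simp at hs
    have h2 : Δ q < 0 := by nlinarith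
    have : (0:ℝ) ∈ Icc (Δ q) (Δ p) := ⟨h2.le, h1'.le⟩
    obtain ⟨z, hz, hz0⟩ := intermediate_value_Icc' hpq hc this
    exact ⟨z, hz, hz0⟩

private lemma sign_const {Δ : ℝ → ℝ} {p q : ℝ} (hpq : p ≤ q)
    (hc : ContinuousOn Δ (Icc p q)) (hz : ∀ x ∈ Icc p q, Δ x ≠ 0) :
    0 < Δ p * Δ q := by
  by_contra h
  push_neg at h
  rcases h.lt_or_eq with h | h
  · obtain ⟨z, hzm, hz0⟩ := exists_zero hpq hc h
    exact hz z hzm hz0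
  · rcases mul_eq_zero.mp h with h | h
    · exact hz p ⟨le_rfl, hpq⟩ h
    · exact hz q ⟨hpq, le_rfl⟩ h

private lemma sgn_pres {x y : ℝ} (h : |y - x| < |x|) : 0 < x * y := by
  rcases lt_trichotomy x 0 with hx | hx | hx
  · rw [abs_of_neg hx, abs_lt] at h
    nlinarith
  · exfalso; rw [hx] at h; simp at h; linarith [abs_nonneg y]
  · rw [abs_of_pos hx, abs_lt] at h
    nlinarith

private lemma sgn_flip {a b a' b' : ℝ} (h1 : 0 < a * a') (h2 : 0 < b * b')
    (h : a * b < 0) : a' * b' < 0 := by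
  by_contra h'
  push_neg at h'
  have e1 : 0 < (a * a') * (b * b') := mul_pos h1 h2
  have e2 : (a * a') * (b * b') = (a * b) * (a' * b') := by ring
  nlinarith [mul_nonpos_of_nonpos_of_nonneg h.le h']

private lemma switch_core : ∀ (n : ℕ) (Δ : ℝ → ℝ) (p q : ℝ), p < q →
    ContinuousOn Δ (Icc p q) → Δ p * Δ q < 0 →
    {x ∈ Icc p q | Δ x = 0}.Finite → ({x ∈ Icc p q | Δ x = 0}).ncard ≤ n →
    ∃ z δ, p < z ∧ z < q ∧ Δ z = 0 ∧ 0 < δ ∧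
      ∀ x : ℝ, 0 < x → x ≤ δ → p < z - x ∧ z + x < q ∧ Δ (z - x) * Δ (z + x) < 0 := by
  intro n
  induction n with
  | zero =>
    intro Δ p q hpq hc hs hfin hcard
    exfalso
    obtain ⟨z, hzm, hz0⟩ := exists_zero hpq.le hc hs
    have hZ : z ∈ {x ∈ Icc p q | Δ x = 0} := ⟨hzm, hz0⟩
    have : {x ∈ Icc p q | Δ x = 0} = ∅ := (Set.ncard_eq_zero hfin).mp (Nat.le_zero.mp hcard)
    rw [this] at hZ
    exact hZ
  | succ n ih =>
    intro Δ p q hpq hc hs hfin hcard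
    set Z := {x ∈ Icc p q | Δ x = 0} with hZdef
    have hΔp : Δ p ≠ 0 := by intro h; rw [h] at hs; simp at hs
    have hΔq : Δ q ≠ 0 := by intro h; rw [h] at hs; simp at hs
    obtain ⟨z0, hz0m, hz00⟩ := exists_zero hpq.le hc hs
    have hZne : Z.Nonempty := ⟨z0, hz0m, hz00⟩
    have hFne : hfin.toFinset.Nonempty := by
      rwa [Set.Finite.toFinset_nonempty]
    set z := hfin.toFinset.max' hFne with hzdef
    have hzZ : z ∈ Z := by
      have := hfin.toFinset.max'_mem hFne
      rwa [Set.Finite.mem_toFinset] at this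
    have hmax : ∀ y ∈ Z, y ≤ z := by
      intro y hy
      exact hfin.toFinset.le_max' y ((Set.Finite.mem_toFinset hfin).mpr hy)
    have hpz : p < z := by
      rcases hzZ.1.1.lt_or_eq with h | h
      · exact h
      · exfalso; exact hΔp (h ▸ hzZ.2)
    have hzq : z < q := by
      rcases hzZ.1.2.lt_or_eq with h | h
      · exact h
      · exfalso; exact hΔq (h ▸ hzZ.2)
    -- choose w with p < w < z and no zeros in [w, z)
    have hW : ∃ w, p < w ∧ w < z ∧ ∀ y, w ≤ y → y < z → Δ y ≠ 0 := by
      set W := {x ∈ Z | x < z} with hWdef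
      by_cases hWne : W.Nonempty
      · have hWfin : W.Finite := hfin.subset (fun x hx => hx.1)
        have hWFne : hWfin.toFinset.Nonempty := by rwa [Set.Finite.toFinset_nonempty]
        set w' := hWfin.toFinset.max' hWFne with hw'def
        have hw'W : w' ∈ W := by
          have := hWfin.toFinset.max'_mem hWFne
          rwa [Set.Finite.mem_toFinset] at this
        have hw'max : ∀ y ∈ W, y ≤ w' := by
          intro y hy
          exact hWfin.toFinset.le_max' y ((Set.Finite.mem_toFinset hWfin).mpr hy)
        refine ⟨(w' + z)/2, ?_, ?_, ?_⟩
        · have : p ≤ w' := hw'W.1.1.1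
          linarith [hw'W.2]
        · linarith [hw'W.2]
        · intro y h1 h2 h3
          have hyZ : y ∈ Z := by
            refine ⟨⟨?_, ?_⟩, h3⟩
            · linarith [hw'W.1.1.1, hw'W.2]
            · linarith
          have : y ∈ W := ⟨hyZ, h2⟩
          have := hw'max y this
          linarith [hw'W.2]
      · refine ⟨(p + z)/2, by linarith, by linarith, ?_⟩
        intro y h1 h2 h3
        have hyZ : y ∈ Z := ⟨⟨by linarith, by linarith⟩, h3⟩
        exact hWne ⟨y, hyZ, h2⟩
    obtain ⟨w, hpw, hwz, hno⟩ := hW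
    have hnoR : ∀ y, z < y → y ≤ q → Δ y ≠ 0 := by
      intro y h1 h2 h3
      have : y ∈ Z := ⟨⟨by linarith, h2⟩, h3⟩
      linarith [hmax y this]
    have hΔw : Δ w ≠ 0 := hno w le_rfl hwz
    by_cases hcase : Δ w * Δ q < 0
    · -- switch at z
      have hδpos : 0 < min (z - w) (q - z) / 2 := by
        have h1 : (0:ℝ) < z - w := by linarith
        have h2 : (0:ℝ) < q - z := by linarith
        have := lt_min h1 h2
        linarith
      refine ⟨z, min (z - w) (q - z) / 2, hpz, hzq, hzZ.2, hδpos, ?_⟩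
      intro x hx0 hxδ
      have hx1 : x ≤ (z - w)/2 := le_trans hxδ (by
        have := min_le_left (z - w) (q - z); linarith)
      have hx2 : x ≤ (q - z)/2 := le_trans hxδ (by
        have := min_le_right (z - w) (q - z); linarith)
      have hA : w < z - x := by linarith
      have hB : z + x < q := by linarith
      refine ⟨by linarith, hB, ?_⟩
      have h1 : 0 < Δ w * Δ (z - x) := by
        refine sign_const (by linarith) (hc.mono (Icc_subset_Icc (by linarith) (by linarith))) ?_
        intro y hy
        exact hno y hy.1 (by linarith [hy.2])
      have h2 : 0 < Δ (z + x) * Δ q := by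
        refine sign_const (by linarith) (hc.mono (Icc_subset_Icc (by linarith) le_rfl)) ?_
        intro y hy
        exact hnoR y (by linarith [hy.1]) hy.2
      -- from h1 h2 hcase : Δ(z-x) * Δ(z+x) < 0
      by_contra hcon
      push_neg at hcon
      have e1 : 0 < (Δ w * Δ (z - x)) * (Δ (z + x) * Δ q) := mul_pos h1 h2
      nlinarith [mul_nonpos_of_nonpos_of_nonneg hcase.le hcon]
    · -- recurse on [p, w]
      have hwq0 : 0 < Δ w * Δ q := by
        rcases (not_lt.mp hcase).lt_or_eq with h | h
        · exact h
        · exfalso; rcases mul_eq_zero.mp h.symm with h | h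
          · exact hΔw h
          · exact hΔq h
      have hpw' : Δ p * Δ w < 0 := by
        have hq2 : 0 < Δ q * Δ q := mul_self_pos.mpr hΔq
        nlinarith
      have hsub : {x ∈ Icc p w | Δ x = 0} ⊆ Z \ {z} := by
        intro x hx
        refine ⟨⟨⟨hx.1.1, by linarith [hx.1.2]⟩, hx.2⟩, ?_⟩
        simp only [mem_singleton_iff]
        intro h
        rw [h] at hx
        linarith [hx.1.2]
      have hfin' : {x ∈ Icc p w | Δ x = 0}.Finite := hfin.subset (fun x hx => (hsub hx).1)
      have hcard' : {x ∈ Icc p w | Δ x = 0}.ncard ≤ n := by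
        have h1 : {x ∈ Icc p w | Δ x = 0}.ncard ≤ (Z \ {z}).ncard :=
          Set.ncard_le_ncard hsub (hfin.subset (fun x hx => hx.1))
        have h2 : (Z \ {z}).ncard < Z.ncard := Set.ncard_diff_singleton_lt_of_mem hzZ hfin
        omega
      obtain ⟨z', δ', h1, h2, h3, h4, h5⟩ :=
        ih Δ p w hpw (hc.mono (Icc_subset_Icc le_rfl (by linarith))) hpw' hfin' hcard'
      exact ⟨z', δ', h1, by linarith, h3, h4, fun x hx0 hxδ =>
        ⟨(h5 x hx0 hxδ).1, by linarith [(h5 x hx0 hxδ).2.1], (h5 x hx0 hxδ).2.2⟩⟩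

set_option maxHeartbeats 1000000 in
private lemma finite_level (F G : ℝ → ℝ) (u v : ℝ) (huv : u < v)
    (hF : AntitoneOn F (Icc u v)) (hG : AntitoneOn G (Icc u v))
    (hF0 : ∀ x ∈ Icc u v, 0 ≤ F x) (hF1 : ∀ x ∈ Icc u v, F x ≤ 1)
    (hG1 : ∀ x ∈ Icc u v, G x ≤ 1) (hGv : 0 < G v)
    (β₀ η : ℝ) (hη : 0 < η) :
    ∃ β, |β - β₀| < η ∧ {x ∈ Icc u v | F x = β * G x}.Finite := by
  set mG := G v with hmG
  have hvI : v ∈ Icc u v := ⟨huv.le, le_rfl⟩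
  have hGpos : ∀ x ∈ Icc u v, mG ≤ G x := fun x hx => hG hx hvI hx.2
  have hG0 : ∀ x ∈ Icc u v, 0 < G x := fun x hx => lt_of_lt_of_le hGv (hGpos x hx)
  set L : ℕ → ℝ := fun m => (v - u) / 2 ^ m with hLdef
  have hL : ∀ m, 0 < L m := fun m => div_pos (by linarith) (by positivity)
  set pt : ℕ → ℕ → ℝ := fun m i => u + i * L m with hptdef
  have hpt0 : ∀ m, pt m 0 = u := by intro m; simp [hptdef]
  have hptN : ∀ m, pt m (2 ^ m) = v := by
    intro m
    have h2 : (2:ℝ) ^ m ≠ 0 := by positivity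
    simp only [hptdef, hLdef]
    push_cast
    field_simp
    ring
  have hptstep : ∀ m i, pt m (i + 1) = pt m i + L m := by
    intro m i; simp only [hptdef]; push_cast; ring
  have hptmono : ∀ m i j, i ≤ j → pt m i ≤ pt m j := by
    intro m i j hij
    simp only [hptdef]
    have : (i:ℝ) ≤ (j:ℝ) := Nat.cast_le.mpr hij
    nlinarith [hL m]
  have hptmem : ∀ m i, i ≤ 2 ^ m → pt m i ∈ Icc u v := by
    intro m i hi
    constructor
    · rw [← hpt0 m]; exact hptmono m 0 i (Nat.zero_le _)
    · rw [← hptN m]; exact hptmono m i (2 ^ m) hi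
  set osc : ℕ → ℕ → ℝ := fun m i =>
    (F (pt m i) - F (pt m (i + 1)) + (G (pt m i) - G (pt m (i + 1)))) / (mG * mG) with hoscdef
  set h : ℝ → ℝ := fun x => F x / G x with hhdef
  have hosc0 : ∀ m i, i + 1 ≤ 2 ^ m → 0 ≤ osc m i := by
    intro m i hi
    have hs := hptmem m i (le_trans (Nat.le_succ i) hi)
    have ht := hptmem m (i + 1) hi
    have hst : pt m i ≤ pt m (i + 1) := hptmono m i (i + 1) (Nat.le_succ i)
    have h1 : F (pt m (i+1)) ≤ F (pt m i) := hF hs ht hst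
    have h2 : G (pt m (i+1)) ≤ G (pt m i) := hG hs ht hst
    have : (0:ℝ) < mG * mG := by positivity
    apply div_nonneg (by linarith) this.le
  have hkey : ∀ m i, i + 1 ≤ 2 ^ m → ∀ x ∈ Icc (pt m i) (pt m (i + 1)),
      |h x - h (pt m i)| ≤ osc m i := by
    intro m i hi x hx
    set s := pt m i
    set t := pt m (i + 1)
    have hsI : s ∈ Icc u v := hptmem m i (le_trans (Nat.le_succ i) hi)
    have htI : t ∈ Icc u v := hptmem m (i + 1) hi
    have hxI : x ∈ Icc u v := ⟨le_trans hsI.1 hx.1, le_trans hx.2 htI.2⟩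
    have hGx := hG0 x hxI
    have hGs := hG0 s hsI
    have hGxm := hGpos x hxI
    have hGsm := hGpos s hsI
    have hFx1 := hF1 x hxI
    have hFs1 := hF1 s hsI
    have hFx0 := hF0 x hxI
    have hFs0 := hF0 s hsI
    have hGx1 := hG1 x hxI
    have hGs1 := hG1 s hsI
    have hFts : F t ≤ F x := hF hxI htI hx.2
    have hFsx : F x ≤ F s := hF hsI hxI hx.1
    have hGts : G t ≤ G x := hG hxI htI hx.2
    have hGsx : G x ≤ G s := hG hsI hxI hx.1
    have hnum : |F x * G s - F s * G x| ≤ (F s - F t) + (G s - G t) := by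
      rw [abs_le]
      constructor <;> nlinarith
    have e : h x - h s = (F x * G s - F s * G x) / (G x * G s) := by
      simp only [hhdef]
      field_simp
    rw [e, abs_div, abs_of_pos (mul_pos hGx hGs)]
    have hden : mG * mG ≤ G x * G s := by nlinarith
    calc |F x * G s - F s * G x| / (G x * G s)
        ≤ ((F s - F t) + (G s - G t)) / (mG * mG) := by
          apply div_le_div₀ (by linarith [abs_nonneg (F x * G s - F s * G x)]) hnum
            (by positivity) hden
      _ = osc m i := rfl
  set A : ℕ → ℕ → Set ℝ := fun m i =>
    Icc (h (pt m i) - osc m i) (h (pt m i) + osc m i) with hAdef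
  set N : ℕ → ℝ → ENNReal := fun m β => ∑ i ∈ Finset.range (2 ^ m), (A m i).indicator 1 β
    with hNdef
  have hNmeas : ∀ m, Measurable (N m) :=
    fun m => Finset.measurable_sum _ (fun i _ => measurable_one.indicator measurableSet_Icc)
  set V : ℝ := (F u - F v + (G u - G v)) / (mG * mG) with hVdef
  have hNint : ∀ m, ∫⁻ β, N m β ≤ ENNReal.ofReal (2 * V) := by
    intro m
    rw [hNdef]
    rw [lintegral_finset_sum _ (fun i _ => measurable_one.indicator measurableSet_Icc)]
    have e1 : ∀ i ∈ Finset.range (2 ^ m),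
        ∫⁻ β, (A m i).indicator 1 β = ENNReal.ofReal (2 * osc m i) := by
      intro i hi
      rw [lintegral_indicator_one measurableSet_Icc]
      simp only [Real.volume_Icc]
      congr 1
      ring
    rw [Finset.sum_congr rfl e1]
    rw [← ENNReal.ofReal_sum_of_nonneg (fun i hi => by
      have := hosc0 m i (Finset.mem_range.mp hi)
      linarith)]
    apply ENNReal.ofReal_le_ofReal
    have e2 : ∀ i, 2 * osc m i =
        (fun j => 2 * ((F (pt m j) + G (pt m j)) / (mG * mG))) i
        - (fun j => 2 * ((F (pt m j) + G (pt m j)) / (mG * mG))) (i + 1) := by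
      intro i
      simp only [hoscdef]
      field_simp
      ring
    calc ∑ i ∈ Finset.range (2 ^ m), 2 * osc m i
        = ∑ i ∈ Finset.range (2 ^ m),
            ((fun j => 2 * ((F (pt m j) + G (pt m j)) / (mG * mG))) i
             - (fun j => 2 * ((F (pt m j) + G (pt m j)) / (mG * mG))) (i + 1)) := by
          apply Finset.sum_congr rfl
          intro i _
          exact e2 i
      _ = 2 * ((F (pt m 0) + G (pt m 0)) / (mG * mG))
          - 2 * ((F (pt m (2 ^ m)) + G (pt m (2 ^ m))) / (mG * mG)) :=
          Finset.sum_range_sub' _ _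
      _ ≤ 2 * V := by
          rw [hpt0, hptN, hVdef]
          have : (0:ℝ) < mG * mG := by positivity
          field_simp
          ring_nf
          linarith
  have hcov : ∀ β (K : ℕ), {x ∈ Icc u v | F x = β * G x}.Infinite →
      ∃ m₀, ∀ m, m₀ ≤ m → (K : ENNReal) ≤ N m β := by
    intro β K hinf
    obtain ⟨P, hPsub, hPcard⟩ := hinf.exists_subset_card_eq K
    obtain ⟨δP, hδP0, hsep⟩ : ∃ δP, 0 < δP ∧ ∀ x ∈ P, ∀ y ∈ P, x ≠ y → δP ≤ |x - y| := by
      set T := (P ×ˢ P).filter (fun pr => pr.1 ≠ pr.2) with hTdef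
      by_cases hT : T.Nonempty
      · obtain ⟨pr0, hpr0, hmin⟩ := T.exists_min_image (fun pr => |pr.1 - pr.2|) hT
        refine ⟨|pr0.1 - pr0.2|, ?_, ?_⟩
        · have h2 := (Finset.mem_filter.mp hpr0).2
          exact abs_pos.mpr (sub_ne_zero.mpr h2)
        · intro x hx y hy hxy
          exact hmin (x, y) (Finset.mem_filter.mpr
            ⟨Finset.mem_product.mpr ⟨hx, hy⟩, hxy⟩)
      · refine ⟨1, one_pos, ?_⟩
        intro x hx y hy hxy
        exact absurd ⟨(x, y), Finset.mem_filter.mpr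
          ⟨Finset.mem_product.mpr ⟨hx, hy⟩, hxy⟩⟩ hT
    obtain ⟨m₀, hm₀⟩ := pow_unbounded_of_one_lt ((v - u) / δP) (one_lt_two (α := ℝ))
    refine ⟨m₀, ?_⟩
    intro m hm
    have hLm : L m < δP := by
      have h2m : (2:ℝ) ^ m₀ ≤ 2 ^ m := pow_le_pow_right₀ one_le_two hm
      have h1 : L m ≤ L m₀ := by
        apply div_le_div_of_nonneg_left (by linarith) (by positivity) h2m
      have h2 : L m₀ < δP := by
        rw [hLdef]
        rw [div_lt_iff₀ (by positivity)]
        have := (div_lt_iff₀ hδP0).mp hm₀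
        linarith [this]
      linarith
    have h2mpos : 0 < 2 ^ m := Nat.pow_pos (by norm_num)
    set ix : ℝ → ℕ := fun x => min (2 ^ m - 1) ⌊(x - u) / L m⌋₊ with hixdef
    have hix1 : ∀ x, ix x < 2 ^ m :=
      fun x => lt_of_le_of_lt (min_le_left _ _) (Nat.sub_lt h2mpos one_pos)
    have hix2 : ∀ x ∈ Icc u v, pt m (ix x) ≤ x ∧ x ≤ pt m (ix x + 1) := by
      intro x hx
      have hxu : 0 ≤ x - u := by linarith [hx.1]
      have hflr : (⌊(x - u) / L m⌋₊ : ℝ) ≤ (x - u) / L m :=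
        Nat.floor_le (div_nonneg hxu (hL m).le)
      constructor
      · have hle : ((ix x : ℕ) : ℝ) ≤ (x - u) / L m := by
          refine le_trans ?_ hflr
          exact_mod_cast Nat.cast_le.mpr (min_le_right _ _)
        have := mul_le_mul_of_nonneg_right hle (hL m).le
        rw [div_mul_cancel₀ _ (hL m).ne'] at this
        simp only [hptdef]
        linarith
      · by_cases hj : ⌊(x - u) / L m⌋₊ ≤ 2 ^ m - 1
        · have hixeq : ix x = ⌊(x - u) / L m⌋₊ := min_eq_right hj
          have hlt : (x - u) / L m < ⌊(x - u) / L m⌋₊ + 1 := Nat.lt_floor_add_one _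
          have := mul_lt_mul_of_pos_right hlt (hL m)
          rw [div_mul_cancel₀ _ (hL m).ne'] at this
          simp only [hptdef, hixeq]
          push_cast
          linarith
        · have hixeq : ix x = 2 ^ m - 1 := min_eq_left (le_of_not_ge hj)
          have : ix x + 1 = 2 ^ m := by
            rw [hixeq]
            exact Nat.succ_pred_eq_of_pos h2mpos
          rw [this, hptN]
          exact hx.2
    have hPIcc : ∀ x ∈ P, x ∈ Icc u v := by
      intro x hx
      exact (hPsub hx).1
    have hinj : Set.InjOn ix ↑P := by
      intro x hx y hy hxy
      by_contra hne
      have h1 := hix2 x (hPIcc x hx)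
      have h2 := hix2 y (hPIcc y hy)
      rw [hxy] at h1
      have hstep := hptstep m (ix y)
      have habs : |x - y| ≤ L m := by
        rw [abs_le]
        constructor <;> [linarith [h1.1, h2.2, hstep]; linarith [h1.2, h2.1, hstep]]
      have := hsep x hx y hy hne
      linarith
    have himg : P.image ix ⊆ Finset.range (2 ^ m) := by
      intro i hi
      rw [Finset.mem_range]
      obtain ⟨x, _, rfl⟩ := Finset.mem_image.mp hi
      exact hix1 x
    have hmem : ∀ i ∈ P.image ix, β ∈ A m i := by
      intro i hi
      obtain ⟨x, hxP, rfl⟩ := Finset.mem_image.mp hi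
      have hxS := hPsub hxP
      have hxI : x ∈ Icc u v := hxS.1
      have hβ : β = h x := by
        have hGx := hG0 x hxI
        simp only [hhdef]
        rw [hxS.2]
        field_simp
      have hk := hkey m (ix x) (hix1 x) x ⟨(hix2 x hxI).1, (hix2 x hxI).2⟩
      rw [← hβ] at hk
      rw [abs_le] at hk
      exact ⟨by linarith [hk.1], by linarith [hk.2]⟩
    calc (K : ENNReal) = (P.card : ENNReal) := by rw [hPcard]
      _ = ((P.image ix).card : ENNReal) := by rw [Finset.card_image_of_injOn hinj]
      _ = ∑ _i ∈ P.image ix, (1 : ENNReal) := by simp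
      _ ≤ ∑ i ∈ P.image ix, (A m i).indicator 1 β := by
          apply Finset.sum_le_sum
          intro i hi
          rw [Set.indicator_of_mem (hmem i hi)]
          exact le_rfl
      _ ≤ N m β := Finset.sum_le_sum_of_subset himg
  -- final assembly
  by_contra hcon
  push_neg at hcon
  have hV0 : 0 ≤ V := by
    have h1 : F v ≤ F u := hF ⟨le_rfl, huv.le⟩ hvI huv.le
    have h2 : G v ≤ G u := hG ⟨le_rfl, huv.le⟩ hvI huv.le
    apply div_nonneg (by linarith) (by positivity)
  set K : ℕ := ⌈(2 * V) / η⌉₊ + 1 with hKdef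
  have hK0 : 0 < K := Nat.succ_pos _
  have hKgt : (2 * V) / η < (K : ℝ) := by
    have := Nat.le_ceil ((2 * V) / η)
    have h2 : ((⌈(2 * V) / η⌉₊ : ℝ)) < (K : ℝ) := by
      rw [hKdef]
      push_cast
      linarith
    linarith
  have hVK : (2 * V) / (K : ℝ) < 2 * η := by
    rw [div_lt_iff₀ (by exact_mod_cast hK0)]
    have h2 : 2 * V < (K : ℝ) * η := by
      have := (div_lt_iff₀ hη).mp hKgt
      linarith
    nlinarith
  set D : ℕ → Set ℝ := fun m₀ => ⋂ m, ⋂ (_ : m₀ ≤ m), {β | (K : ENNReal) ≤ N m β} with hDdef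
  have hDmono : Monotone D := by
    intro m₀ m₁ hm β hβ
    simp only [hDdef, mem_iInter] at hβ ⊢
    intro m hm1
    exact hβ m (le_trans hm hm1)
  have hC : ∀ m, volume {β | (K : ENNReal) ≤ N m β} ≤ ENNReal.ofReal (2 * V) / K := by
    intro m
    have h1 := meas_ge_le_lintegral_div (μ := volume) (hNmeas m).aemeasurable
      (ε := (K : ENNReal)) (Nat.cast_ne_zero.mpr hK0.ne')
      (ENNReal.natCast_ne_top K)
    exact le_trans h1 (ENNReal.div_le_div_right (hNint m) _)
  have hsub : Ioo (β₀ - η) (β₀ + η) ⊆ ⋃ m₀, D m₀ := by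
    intro β hβ
    have hβη : |β - β₀| < η := abs_lt.mpr ⟨by linarith [hβ.1], by linarith [hβ.2]⟩
    have hinf : {x ∈ Icc u v | F x = β * G x}.Infinite := hcon β hβη
    obtain ⟨m₀, hm₀⟩ := hcov β K hinf
    refine mem_iUnion.mpr ⟨m₀, ?_⟩
    simp only [hDdef, mem_iInter]
    intro m hm
    exact hm₀ m hm
  have hmeasure : volume (⋃ m₀, D m₀) ≤ ENNReal.ofReal (2 * V) / K := by
    rw [Directed.measure_iUnion hDmono.directed_le]
    refine iSup_le fun m₀ => le_trans (measure_mono ?_) (hC m₀)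
    intro β hβ
    simp only [hDdef, mem_iInter] at hβ
    exact hβ m₀ le_rfl
  have hlt : ENNReal.ofReal (2 * V) / (K : ENNReal) < ENNReal.ofReal (2 * η) := by
    rw [show ((K : ENNReal)) = ENNReal.ofReal (K : ℝ) from (ENNReal.ofReal_natCast K).symm]
    rw [← ENNReal.ofReal_div_of_pos (by exact_mod_cast hK0)]
    exact (ENNReal.ofReal_lt_ofReal_iff (by linarith)).mpr hVK
  have hfinal : volume (Ioo (β₀ - η) (β₀ + η)) ≤ ENNReal.ofReal (2 * V) / K :=
    le_trans (measure_mono hsub) hmeasure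
  rw [Real.volume_Ioo, show β₀ + η - (β₀ - η) = 2 * η by ring] at hfinal
  exact absurd (lt_of_le_of_lt hfinal hlt) (lt_irrefl _)

private lemma window {φ ψ : ℝ → ℝ} {a b : ℝ} (ha : 0 < a)
    (hφc : ContinuousOn φ (Icc 0 1)) (hψc : ContinuousOn ψ (Icc 0 1))
    {u v : ℝ} (hu : 0 < u) (huv : u < v) (hv : v < min 1 (1/a))
    (hsgn : (φ (a*u) - b*ψ u) * (φ (a*v) - b*ψ v) < 0)
    (hfin : {x ∈ Icc u v | φ (a*x) - b*ψ x = 0}.Finite) :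
    ∃ z, u < z ∧ z < v ∧ SignSwitch (fun x => φ (a*x) - b*ψ x) (min 1 (1/a)) z z := by
  set ℓ := min 1 (1/a) with hℓdef
  have hv1 : v < 1 := lt_of_lt_of_le hv (min_le_left _ _)
  have hva : v < 1/a := lt_of_lt_of_le hv (min_le_right _ _)
  set Δ : ℝ → ℝ := fun x => φ (a*x) - b*ψ x with hΔdef
  have hmaps : MapsTo (fun x => a*x) (Icc u v) (Icc 0 1) := by
    intro x hx
    constructor
    · exact mul_nonneg ha.le (le_trans hu.le hx.1)
    · have h2 : a * x ≤ a * v := by nlinarith [hx.2]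
      have h3 : a * v ≤ a * (1/a) := by nlinarith
      rw [mul_one_div, div_self ha.ne'] at h3
      show a * x ≤ 1
      linarith
  have hsub : Icc u v ⊆ Icc 0 1 := fun x hx =>
    ⟨le_trans hu.le hx.1, le_trans hx.2 hv1.le⟩
  have hΔc : ContinuousOn Δ (Icc u v) := by
    apply ContinuousOn.sub
    · exact hφc.comp ((continuous_const.mul continuous_id).continuousOn) hmaps
    · exact continuous_const.continuousOn.mul (hψc.mono hsub)
  obtain ⟨z, δ, h1, h2, h3, h4, h5⟩ := switch_core
    {x ∈ Icc u v | Δ x = 0}.ncard Δ u v huv hΔc hsgn hfin le_rfl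
  have hz0 : 0 < z := lt_trans hu h1
  have hzℓ : z < ℓ := lt_trans h2 hv
  refine ⟨z, h1, h2, hz0, le_rfl, hzℓ, ?_, ?_⟩
  · intro x hx
    have : x = z := le_antisymm hx.2 hx.1
    rw [this]; exact h3
  · refine ⟨min δ (min z (ℓ - z)), ?_, min_le_right _ _, ?_⟩
    · have hp1 : 0 < ℓ - z := by linarith
      have := lt_min h4 (lt_min hz0 hp1)
      exact this
    · intro x hx0 hxδ
      exact (h5 x hx0 (le_trans hxδ (min_le_left _ _))).2.2

private lemma switch_disjoint {Δ : ℝ → ℝ} {ℓ c d c' d' : ℝ}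
    (h1 : SignSwitch Δ ℓ c d) (h2 : SignSwitch Δ ℓ c' d')
    (hne : ((c, d) : ℝ × ℝ) ≠ (c', d')) : d < c' ∨ d' < c := by
  by_contra hcon
  push_neg at hcon
  obtain ⟨hc'd, hcd'⟩ := hcon
  obtain ⟨hc1, hcd1, hd1, hz1, δ1, hδ1, hδ1b, hp1⟩ := h1
  obtain ⟨hc2, hcd2, hd2, hz2, δ2, hδ2, hδ2b, hp2⟩ := h2
  have hdd : d = d' := by
    by_contra hdd
    rcases lt_or_gt_of_ne hdd with hlt | hgt
    · have hx0 : 0 < min δ1 (d' - d) := lt_min hδ1 (by linarith)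
      have := hp1 _ hx0 (min_le_left _ _)
      have hz : Δ (d + min δ1 (d' - d)) = 0 := by
        apply hz2
        constructor
        · linarith [lt_min hδ1 (show (0:ℝ) < d' - d by linarith)]
        · linarith [min_le_right δ1 (d' - d)]
      rw [hz, mul_zero] at this
      exact lt_irrefl _ this
    · have hx0 : 0 < min δ2 (d - d') := lt_min hδ2 (by linarith)
      have := hp2 _ hx0 (min_le_left _ _)
      have hz : Δ (d' + min δ2 (d - d')) = 0 := by
        apply hz1
        constructor
        · linarith [lt_min hδ2 (show (0:ℝ) < d - d' by linarith)]
        · linarith [min_le_right δ2 (d - d')]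
      rw [hz, mul_zero] at this
      exact lt_irrefl _ this
  have hcc : c = c' := by
    by_contra hcc
    rcases lt_or_gt_of_ne hcc with hlt | hgt
    · have hx0 : 0 < min δ2 (c' - c) := lt_min hδ2 (by linarith)
      have := hp2 _ hx0 (min_le_left _ _)
      have hz : Δ (c' - min δ2 (c' - c)) = 0 := by
        apply hz1
        constructor
        · linarith [min_le_right δ2 (c' - c)]
        · have : 0 < min δ2 (c' - c) := hx0
          linarith [hcd2, hdd]
      rw [hz, zero_mul] at this
      exact lt_irrefl _ this
    · have hx0 : 0 < min δ1 (c - c') := lt_min hδ1 (by linarith)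
      have := hp1 _ hx0 (min_le_left _ _)
      have hz : Δ (c - min δ1 (c - c')) = 0 := by
        apply hz2
        constructor
        · linarith [min_le_right δ1 (c - c')]
        · have : 0 < min δ1 (c - c') := hx0
          linarith [hcd1, hdd]
      rw [hz, zero_mul] at this
      exact lt_irrefl _ this
  exact hne (by rw [hdd, hcc])

private lemma three_of_two_lt {α : Type*} {S : Set α} (h : 2 < S.encard) :
    ∃ p₁ p₂ p₃, p₁ ∈ S ∧ p₂ ∈ S ∧ p₃ ∈ S ∧ p₁ ≠ p₂ ∧ p₁ ≠ p₃ ∧ p₂ ≠ p₃ := by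
  have h0 : S.Nonempty := by
    rw [← Set.encard_pos]
    exact lt_trans (by norm_num) h
  obtain ⟨x, hx⟩ := h0
  have h1 : ∃ y ∈ S, y ≠ x := by
    by_contra hcon
    push_neg at hcon
    have : S ⊆ {x} := fun y hy => hcon y hy
    have := Set.encard_mono this
    rw [Set.encard_singleton] at this
    exact absurd (lt_of_lt_of_le h this) (by norm_num)
  obtain ⟨y, hy, hyx⟩ := h1
  have h2 : ∃ z ∈ S, z ≠ x ∧ z ≠ y := by
    by_contra hcon
    push_neg at hcon
    have hsub : S ⊆ {x, y} := by
      intro z hz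
      rcases eq_or_ne z x with h | h
      · exact Or.inl h
      · exact Or.inr (hcon z hz h)
    have := Set.encard_mono hsub
    rw [Set.encard_pair (Ne.symm hyx)] at this
    exact absurd (lt_of_lt_of_le h this) (lt_irrefl _)
  obtain ⟨z, hz, hzx, hzy⟩ := h2
  exact ⟨x, y, z, hx, hy, hz, Ne.symm hyx, Ne.symm hzx, Ne.symm hzy⟩

private lemma encard_three_le {α : Type*} {S : Set α} {p₁ p₂ p₃ : α}
    (h1 : p₁ ∈ S) (h2 : p₂ ∈ S) (h3 : p₃ ∈ S)
    (h12 : p₁ ≠ p₂) (h13 : p₁ ≠ p₃) (h23 : p₂ ≠ p₃) : 3 ≤ S.encard := by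
  have hsub : ({p₁, p₂, p₃} : Set α) ⊆ S := by
    intro x hx
    rcases hx with h | h | h
    · exact h ▸ h1
    · exact h ▸ h2
    · exact h ▸ h3
  have he : ({p₁, p₂, p₃} : Set α).encard = 3 := by
    rw [Set.encard_insert_of_notMem (by simp [h12, h13]),
        Set.encard_pair h23]
    rfl
  rw [← he]
  exact Set.encard_mono hsub

private lemma encard_two_le {α : Type*} {S : Set α} {p₁ p₂ : α}
    (h1 : p₁ ∈ S) (h2 : p₂ ∈ S) (h12 : p₁ ≠ p₂) : 2 ≤ S.encard := by
  have hsub : ({p₁, p₂} : Set α) ⊆ S := by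
    intro x hx
    rcases hx with h | h
    · exact h ▸ h1
    · exact h ▸ h2
  rw [← Set.encard_pair h12]
  exact Set.encard_mono hsub

section Windows

variable {φ ψ : ℝ → ℝ}

private lemma axmem {a v₂ : ℝ} (ha : 0 < a) (hv : v₂ < min 1 (1/a)) :
    ∀ x : ℝ, 0 ≤ x → x ≤ v₂ → a * x ∈ Icc (0:ℝ) 1 := by
  intro x hx0 hxv
  have hva : v₂ < 1/a := lt_of_lt_of_le hv (min_le_right _ _)
  have h2 : a * x ≤ a * (1/a) := by nlinarith
  rw [mul_one_div, div_self ha.ne'] at h2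
  exact ⟨mul_nonneg ha.le hx0, h2⟩

/-- From two strict-sign windows for parameter `b`, get `2 ≤ crossNum φ ψ`. -/
private lemma windows_two (hφ : MemD φ) (hψ : MemD ψ) {a b u₁ v₁ u₂ v₂ : ℝ}
    (ha : 0 < a) (hb : 0 < b)
    (h0 : 0 < u₁) (h1 : u₁ < v₁) (h2 : v₁ ≤ u₂) (h3 : u₂ < v₂) (h4 : v₂ < min 1 (1/a))
    (hs1 : (φ (a*u₁) - b*ψ u₁) * (φ (a*v₁) - b*ψ v₁) < 0)
    (hs2 : (φ (a*u₂) - b*ψ u₂) * (φ (a*v₂) - b*ψ v₂) < 0) :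
    2 ≤ crossNum φ ψ := by
  obtain ⟨⟨⟨hφmem, hφa, hφ0, _⟩, hφc, hφ1⟩, hφsa⟩ := hφ
  obtain ⟨⟨⟨hψmem, hψa, hψ0, _⟩, hψc, hψ1⟩, hψsa⟩ := hψ
  set ℓ := min 1 (1/a) with hℓdef
  set Δ : ℝ → ℝ := fun x => φ (a*x) - b*ψ x with hΔdef
  have hIcc : ∀ x : ℝ, 0 ≤ x → x ≤ v₂ → x ∈ Icc (0:ℝ) 1 := by
    intro x hx0 hxv
    exact ⟨hx0, le_trans hxv (le_of_lt (lt_of_lt_of_le h4 (min_le_left _ _)))⟩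
  -- margins
  have hne : ∀ {x y : ℝ}, x * y < 0 → x ≠ 0 ∧ y ≠ 0 := by
    intro x y hxy
    constructor <;> intro h <;> rw [h] at hxy <;> simp at hxy
  set M := min (min |Δ u₁| |Δ v₁|) (min |Δ u₂| |Δ v₂|) with hMdef
  have hM0 : 0 < M := by
    have e1 := hne hs1
    have e2 := hne hs2
    refine lt_min (lt_min ?_ ?_) (lt_min ?_ ?_) <;> rw [abs_pos]
    exacts [e1.1, e1.2, e2.1, e2.2]
  have hMle : M ≤ |Δ u₁| ∧ M ≤ |Δ v₁| ∧ M ≤ |Δ u₂| ∧ M ≤ |Δ v₂| := by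
    refine ⟨?_, ?_, ?_, ?_⟩
    · exact le_trans (min_le_left _ _) (min_le_left _ _)
    · exact le_trans (min_le_left _ _) (min_le_right _ _)
    · exact le_trans (min_le_right _ _) (min_le_left _ _)
    · exact le_trans (min_le_right _ _) (min_le_right _ _)
  -- perturb b
  have hβex := finite_level (fun x => φ (a*x)) ψ u₁ v₂
    (by linarith)
    (by
      intro x hx y hy hxy
      have hax := axmem ha h4 x (by linarith [hx.1]) hx.2
      have hay := axmem ha h4 y (by linarith [hy.1]) hy.2
      exact hφa hax hay (by nlinarith))
    (hψa.mono (Icc_subset_Icc (by linarith) (by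
      linarith [lt_of_lt_of_le h4 (min_le_left 1 (1/a))])))
    (fun x hx => (hφmem _ (axmem ha h4 x (by linarith [hx.1]) hx.2)).1)
    (fun x hx => (hφmem _ (axmem ha h4 x (by linarith [hx.1]) hx.2)).2)
    (fun x hx => (hψmem x (hIcc x (by linarith [hx.1]) hx.2)).2)
    (by
      have hv1 : v₂ < 1 := lt_of_lt_of_le h4 (min_le_left _ _)
      have := hψsa (hIcc v₂ (by linarith) le_rfl) ⟨zero_le_one, le_rfl⟩ hv1
      rw [hψ1] at this
      linarith)
    b (min M b) (lt_min hM0 hb)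
  obtain ⟨β, hβb, hβfin⟩ := hβex
  have hβ0 : 0 < β := by
    have h5 : |β - b| < b := lt_of_lt_of_le hβb (min_le_right _ _)
    rw [abs_lt] at h5
    linarith [h5.1]
  have hβM : |β - b| < M := lt_of_lt_of_le hβb (min_le_left _ _)
  set Δβ : ℝ → ℝ := fun x => φ (a*x) - β*ψ x with hΔβdef
  have hpres : ∀ x : ℝ, 0 ≤ x → x ≤ v₂ → M ≤ |Δ x| → 0 < Δ x * Δβ x := by
    intro x hx0 hxv hMx
    apply sgn_pres
    have e : Δβ x - Δ x = (b - β) * ψ x := by simp only [hΔdef, hΔβdef]; ring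
    have hψx := hψmem x (hIcc x hx0 hxv)
    have : |Δβ x - Δ x| ≤ |b - β| := by
      rw [e, abs_mul]
      calc |b - β| * |ψ x| ≤ |b - β| * 1 := by
            apply mul_le_mul_of_nonneg_left _ (abs_nonneg _)
            rw [abs_le]
            exact ⟨by linarith [hψx.1], hψx.2⟩
        _ = |b - β| := mul_one _
    calc |Δβ x - Δ x| ≤ |b - β| := this
      _ = |β - b| := abs_sub_comm _ _
      _ < M := hβM
      _ ≤ |Δ x| := hMx
  have hfin' : {x ∈ Icc u₁ v₂ | φ (a*x) - β * ψ x = 0}.Finite := by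
    have e : {x ∈ Icc u₁ v₂ | φ (a*x) - β * ψ x = 0}
        = {x ∈ Icc u₁ v₂ | φ (a*x) = β * ψ x} := by
      ext x; simp [sub_eq_zero]
    rw [e]; exact hβfin
  have hw1 : ∃ z, u₁ < z ∧ z < v₁ ∧ SignSwitch Δβ ℓ z z := by
    apply window ha hφc hψc h0 h1 (by rw [hℓdef] at *; linarith)
    · exact sgn_flip
        (hpres u₁ h0.le (by linarith) hMle.1)
        (hpres v₁ (by linarith) (by linarith) hMle.2.1) hs1
    · apply hfin'.subset
      intro x hx
      exact ⟨⟨hx.1.1, by linarith [hx.1.2]⟩, hx.2⟩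
  have hw2 : ∃ z, u₂ < z ∧ z < v₂ ∧ SignSwitch Δβ ℓ z z := by
    apply window ha hφc hψc (by linarith) h3 h4
    · exact sgn_flip
        (hpres u₂ (by linarith) (by linarith) hMle.2.2.1)
        (hpres v₂ (by linarith) le_rfl hMle.2.2.2) hs2
    · apply hfin'.subset
      intro x hx
      exact ⟨⟨by linarith [hx.1.1], hx.1.2⟩, hx.2⟩
  obtain ⟨z₁, hz₁a, hz₁b, hz₁s⟩ := hw1
  obtain ⟨z₂, hz₂a, hz₂b, hz₂s⟩ := hw2
  have hzne : ((z₁, z₁) : ℝ × ℝ) ≠ (z₂, z₂) := by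
    intro h
    have : z₁ = z₂ := congrArg Prod.fst h
    linarith
  have h2le : 2 ≤ nSwitch Δβ ℓ :=
    encard_two_le (p₁ := ((z₁, z₁) : ℝ × ℝ)) (p₂ := ((z₂, z₂) : ℝ × ℝ))
      hz₁s hz₂s hzne
  calc (2 : ℕ∞) ≤ nSwitch Δβ ℓ := h2le
    _ ≤ ⨆ b' ∈ Set.Ioi (0:ℝ), nSwitch (fun x => φ (a * x) - b' * ψ x) (min 1 (1/a)) := by
        exact le_biSup (fun b' => nSwitch (fun x => φ (a * x) - b' * ψ x) (min 1 (1/a)))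
          (mem_Ioi.mpr hβ0)
    _ ≤ crossNum φ ψ := by
        exact le_biSup (fun a' => ⨆ b' ∈ Set.Ioi (0:ℝ),
          nSwitch (fun x => φ (a' * x) - b' * ψ x) (min 1 (1/a'))) (mem_Ioi.mpr ha)

/-- From three strict-sign windows for parameter `b`, get `3 ≤ crossNum φ ψ`. -/
private lemma windows_three (hφ : MemD φ) (hψ : MemD ψ)
    {a b u₁ v₁ u₂ v₂ u₃ v₃ : ℝ}
    (ha : 0 < a) (hb : 0 < b)
    (h0 : 0 < u₁) (h1 : u₁ < v₁) (h2 : v₁ ≤ u₂) (h3 : u₂ < v₂) (h4 : v₂ ≤ u₃)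
    (h5 : u₃ < v₃) (h6 : v₃ < min 1 (1/a))
    (hs1 : (φ (a*u₁) - b*ψ u₁) * (φ (a*v₁) - b*ψ v₁) < 0)
    (hs2 : (φ (a*u₂) - b*ψ u₂) * (φ (a*v₂) - b*ψ v₂) < 0)
    (hs3 : (φ (a*u₃) - b*ψ u₃) * (φ (a*v₃) - b*ψ v₃) < 0) :
    3 ≤ crossNum φ ψ := by
  obtain ⟨⟨⟨hφmem, hφa, hφ0, _⟩, hφc, hφ1⟩, hφsa⟩ := hφ
  obtain ⟨⟨⟨hψmem, hψa, hψ0, _⟩, hψc, hψ1⟩, hψsa⟩ := hψ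
  set ℓ := min 1 (1/a) with hℓdef
  set Δ : ℝ → ℝ := fun x => φ (a*x) - b*ψ x with hΔdef
  have hIcc : ∀ x : ℝ, 0 ≤ x → x ≤ v₃ → x ∈ Icc (0:ℝ) 1 := by
    intro x hx0 hxv
    exact ⟨hx0, le_trans hxv (le_of_lt (lt_of_lt_of_le h6 (min_le_left _ _)))⟩
  have hne : ∀ {x y : ℝ}, x * y < 0 → x ≠ 0 ∧ y ≠ 0 := by
    intro x y hxy
    constructor <;> intro h <;> rw [h] at hxy <;> simp at hxy
  set M := min (min (min |Δ u₁| |Δ v₁|) (min |Δ u₂| |Δ v₂|)) (min |Δ u₃| |Δ v₃|)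
    with hMdef
  have hM0 : 0 < M := by
    have e1 := hne hs1
    have e2 := hne hs2
    have e3 := hne hs3
    refine lt_min (lt_min (lt_min ?_ ?_) (lt_min ?_ ?_)) (lt_min ?_ ?_) <;> rw [abs_pos]
    exacts [e1.1, e1.2, e2.1, e2.2, e3.1, e3.2]
  have hMle : M ≤ |Δ u₁| ∧ M ≤ |Δ v₁| ∧ M ≤ |Δ u₂| ∧ M ≤ |Δ v₂|
      ∧ M ≤ |Δ u₃| ∧ M ≤ |Δ v₃| := by
    refine ⟨?_, ?_, ?_, ?_, ?_, ?_⟩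
    · exact le_trans (min_le_left _ _) (le_trans (min_le_left _ _) (min_le_left _ _))
    · exact le_trans (min_le_left _ _) (le_trans (min_le_left _ _) (min_le_right _ _))
    · exact le_trans (min_le_left _ _) (le_trans (min_le_right _ _) (min_le_left _ _))
    · exact le_trans (min_le_left _ _) (le_trans (min_le_right _ _) (min_le_right _ _))
    · exact le_trans (min_le_right _ _) (min_le_left _ _)
    · exact le_trans (min_le_right _ _) (min_le_right _ _)
  have hβex := finite_level (fun x => φ (a*x)) ψ u₁ v₃
    (by linarith)
    (by
      intro x hx y hy hxy
      have hax := axmem ha h6 x (by linarith [hx.1]) hx.2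
      have hay := axmem ha h6 y (by linarith [hy.1]) hy.2
      exact hφa hax hay (by nlinarith))
    (hψa.mono (Icc_subset_Icc (by linarith) (by
      linarith [lt_of_lt_of_le h6 (min_le_left 1 (1/a))])))
    (fun x hx => (hφmem _ (axmem ha h6 x (by linarith [hx.1]) hx.2)).1)
    (fun x hx => (hφmem _ (axmem ha h6 x (by linarith [hx.1]) hx.2)).2)
    (fun x hx => (hψmem x (hIcc x (by linarith [hx.1]) hx.2)).2)
    (by
      have hv1 : v₃ < 1 := lt_of_lt_of_le h6 (min_le_left _ _)
      have := hψsa (hIcc v₃ (by linarith) le_rfl) ⟨zero_le_one, le_rfl⟩ hv1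
      rw [hψ1] at this
      linarith)
    b (min M b) (lt_min hM0 hb)
  obtain ⟨β, hβb, hβfin⟩ := hβex
  have hβ0 : 0 < β := by
    have h7 : |β - b| < b := lt_of_lt_of_le hβb (min_le_right _ _)
    rw [abs_lt] at h7
    linarith [h7.1]
  have hβM : |β - b| < M := lt_of_lt_of_le hβb (min_le_left _ _)
  set Δβ : ℝ → ℝ := fun x => φ (a*x) - β*ψ x with hΔβdef
  have hpres : ∀ x : ℝ, 0 ≤ x → x ≤ v₃ → M ≤ |Δ x| → 0 < Δ x * Δβ x := by
    intro x hx0 hxv hMx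
    apply sgn_pres
    have e : Δβ x - Δ x = (b - β) * ψ x := by simp only [hΔdef, hΔβdef]; ring
    have hψx := hψmem x (hIcc x hx0 hxv)
    have : |Δβ x - Δ x| ≤ |b - β| := by
      rw [e, abs_mul]
      calc |b - β| * |ψ x| ≤ |b - β| * 1 := by
            apply mul_le_mul_of_nonneg_left _ (abs_nonneg _)
            rw [abs_le]
            exact ⟨by linarith [hψx.1], hψx.2⟩
        _ = |b - β| := mul_one _
    calc |Δβ x - Δ x| ≤ |b - β| := this
      _ = |β - b| := abs_sub_comm _ _
      _ < M := hβM
      _ ≤ |Δ x| := hMx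
  have hfin' : {x ∈ Icc u₁ v₃ | φ (a*x) - β * ψ x = 0}.Finite := by
    have e : {x ∈ Icc u₁ v₃ | φ (a*x) - β * ψ x = 0}
        = {x ∈ Icc u₁ v₃ | φ (a*x) = β * ψ x} := by
      ext x; simp [sub_eq_zero]
    rw [e]; exact hβfin
  have hw1 : ∃ z, u₁ < z ∧ z < v₁ ∧ SignSwitch Δβ ℓ z z := by
    apply window ha hφc hψc h0 h1 (by rw [hℓdef] at *; linarith)
    · exact sgn_flip
        (hpres u₁ h0.le (by linarith) hMle.1)
        (hpres v₁ (by linarith) (by linarith) hMle.2.1) hs1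
    · apply hfin'.subset
      intro x hx
      exact ⟨⟨hx.1.1, by linarith [hx.1.2]⟩, hx.2⟩
  have hw2 : ∃ z, u₂ < z ∧ z < v₂ ∧ SignSwitch Δβ ℓ z z := by
    apply window ha hφc hψc (by linarith) h3 (by rw [hℓdef] at *; linarith)
    · exact sgn_flip
        (hpres u₂ (by linarith) (by linarith) hMle.2.2.1)
        (hpres v₂ (by linarith) (by linarith) hMle.2.2.2.1) hs2
    · apply hfin'.subset
      intro x hx
      exact ⟨⟨by linarith [hx.1.1], by linarith [hx.1.2]⟩, hx.2⟩
  have hw3 : ∃ z, u₃ < z ∧ z < v₃ ∧ SignSwitch Δβ ℓ z z := by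
    apply window ha hφc hψc (by linarith) h5 h6
    · exact sgn_flip
        (hpres u₃ (by linarith) (by linarith) hMle.2.2.2.2.1)
        (hpres v₃ (by linarith) le_rfl hMle.2.2.2.2.2) hs3
    · apply hfin'.subset
      intro x hx
      exact ⟨⟨by linarith [hx.1.1], hx.1.2⟩, hx.2⟩
  obtain ⟨z₁, hz₁a, hz₁b, hz₁s⟩ := hw1
  obtain ⟨z₂, hz₂a, hz₂b, hz₂s⟩ := hw2
  obtain ⟨z₃, hz₃a, hz₃b, hz₃s⟩ := hw3
  have h12' : z₁ < z₂ := by linarith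
  have h23' : z₂ < z₃ := by linarith
  have h3le : 3 ≤ nSwitch Δβ ℓ := by
    refine encard_three_le (p₁ := ((z₁, z₁) : ℝ × ℝ)) (p₂ := ((z₂, z₂) : ℝ × ℝ))
      (p₃ := ((z₃, z₃) : ℝ × ℝ)) hz₁s hz₂s hz₃s ?_ ?_ ?_ <;>
      intro h <;> have := congrArg Prod.fst h <;> simp at this <;> linarith
  calc (3 : ℕ∞) ≤ nSwitch Δβ ℓ := h3le
    _ ≤ ⨆ b' ∈ Set.Ioi (0:ℝ), nSwitch (fun x => φ (a * x) - b' * ψ x) (min 1 (1/a)) := by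
        exact le_biSup (fun b' => nSwitch (fun x => φ (a * x) - b' * ψ x) (min 1 (1/a)))
          (mem_Ioi.mpr hβ0)
    _ ≤ crossNum φ ψ := by
        exact le_biSup (fun a' => ⨆ b' ∈ Set.Ioi (0:ℝ),
          nSwitch (fun x => φ (a' * x) - b' * ψ x) (min 1 (1/a'))) (mem_Ioi.mpr ha)

end Windows

private lemma sort3 {Δ : ℝ → ℝ} {ℓ : ℝ} {P₁ P₂ P₃ : ℝ × ℝ}
    (h1 : SignSwitch Δ ℓ P₁.1 P₁.2) (h2 : SignSwitch Δ ℓ P₂.1 P₂.2)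
    (h3 : SignSwitch Δ ℓ P₃.1 P₃.2)
    (h12 : P₁ ≠ P₂) (h13 : P₁ ≠ P₃) (h23 : P₂ ≠ P₃) :
    ∃ Q₁ Q₂ Q₃ : ℝ × ℝ, SignSwitch Δ ℓ Q₁.1 Q₁.2 ∧ SignSwitch Δ ℓ Q₂.1 Q₂.2 ∧
      SignSwitch Δ ℓ Q₃.1 Q₃.2 ∧ Q₁.2 < Q₂.1 ∧ Q₂.2 < Q₃.1 := by
  have hcd1 := h1.2.1
  have hcd2 := h2.2.1
  have hcd3 := h3.2.1
  have e12 : (P₁.1, P₁.2) ≠ (P₂.1, P₂.2) := by simpa using h12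
  have e13 : (P₁.1, P₁.2) ≠ (P₃.1, P₃.2) := by simpa using h13
  have e23 : (P₂.1, P₂.2) ≠ (P₃.1, P₃.2) := by simpa using h23
  rcases switch_disjoint h1 h2 e12 with hA | hA <;>
    rcases switch_disjoint h1 h3 e13 with hB | hB <;>
      rcases switch_disjoint h2 h3 e23 with hC | hC
  · exact ⟨P₁, P₂, P₃, h1, h2, h3, hA, hC⟩
  · exact ⟨P₁, P₃, P₂, h1, h3, h2, hB, hC⟩
  · exfalso; linarith
  · exact ⟨P₃, P₁, P₂, h3, h1, h2, hB, hA⟩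
  · exact ⟨P₂, P₁, P₃, h2, h1, h3, hA, hB⟩
  · exfalso; linarith
  · exact ⟨P₂, P₃, P₁, h2, h3, h1, hC, hB⟩
  · exact ⟨P₃, P₂, P₁, h3, h2, h1, hC, hA⟩

set_option maxHeartbeats 1000000 in
private lemma lower_bound {f g : ℝ → ℝ} (hf : MemD f) (hg : MemD g)
    (hle : ∀ x ∈ Icc (0:ℝ) 1, g x ≤ f x) {x₀ : ℝ} (hx₀I : x₀ ∈ Icc (0:ℝ) 1)
    (hx₀ne : f x₀ ≠ g x₀) : 2 ≤ crossNum f g := by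
  obtain ⟨⟨⟨hfmem, hfanti, hf0, hfint⟩, hfc, hf1⟩, hfsa⟩ := hf
  obtain ⟨⟨⟨hgmem, hganti, hg0, hgint⟩, hgc, hg1⟩, hgsa⟩ := hg
  obtain ⟨m, hmdef⟩ : ∃ m : ℝ, m = f x₀ - g x₀ := ⟨_, rfl⟩
  have hm : 0 < m := by
    rw [hmdef]
    rcases lt_or_eq_of_le (hle x₀ hx₀I) with h | h
    · linarith
    · exact absurd h.symm hx₀ne
  have hx₀0 : 0 < x₀ := by
    rcases hx₀I.1.lt_or_eq with h | h
    · exact h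
    · exact absurd (by rw [← h, hf0, hg0]) hx₀ne
  have hx₀1 : x₀ < 1 := by
    rcases hx₀I.2.lt_or_eq with h | h
    · exact h
    · exact absurd (by rw [h, hf1, hg1]) hx₀ne
  -- choose t > x₀ with f t > f x₀ - m/4
  have hcf : ContinuousWithinAt f (Icc 0 1) x₀ := hfc x₀ hx₀I
  rw [Metric.continuousWithinAt_iff] at hcf
  obtain ⟨r, hr0, hr⟩ := hcf (m/4) (by linarith)
  obtain ⟨t, htdef⟩ : ∃ t : ℝ, t = x₀ + min r (1 - x₀) / 2 := ⟨_, rfl⟩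
  have hmin0 : 0 < min r (1 - x₀) := lt_min hr0 (by linarith)
  have htx₀ : x₀ < t := by rw [htdef]; linarith
  have ht1 : t < 1 := by
    rw [htdef]
    have := min_le_right r (1 - x₀)
    linarith
  have ht0 : 0 < t := by linarith
  have htI : t ∈ Icc (0:ℝ) 1 := ⟨by linarith, ht1.le⟩
  have htr : dist t x₀ < r := by
    rw [Real.dist_eq, abs_of_pos (by linarith : (0:ℝ) < t - x₀)]
    have := min_le_left r (1 - x₀)
    rw [htdef]
    linarith
  have hft : |f t - f x₀| < m/4 := by
    have := hr htI htr
    rwa [Real.dist_eq] at this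
  rw [abs_lt] at hft
  -- parameters
  obtain ⟨a, hadef⟩ : ∃ a : ℝ, a = t / x₀ := ⟨_, rfl⟩
  have ha1 : 1 < a := by rw [hadef]; exact (one_lt_div hx₀0).mpr htx₀
  have ha0 : 0 < a := by linarith
  have hax₀ : a * x₀ = t := by rw [hadef]; field_simp
  have hainv : 1/a = x₀ / t := by rw [hadef, one_div_div]
  have hℓeq : min 1 (1/a) = 1/a := min_eq_right (by
    rw [div_le_one ha0]; linarith)
  have hx₀ℓ : x₀ < 1/a := by
    rw [hainv, lt_div_iff₀ ht0]
    nlinarith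
  have hainv1 : 1/a < 1 := by rw [div_lt_one ha0]; linarith
  obtain ⟨b, hbdef⟩ : ∃ b : ℝ, b = 1 + m/4 := ⟨_, rfl⟩
  have hb0 : 0 < b := by rw [hbdef]; linarith
  have hΔx₀ : m/2 ≤ f (a * x₀) - b * g x₀ := by
    have hgx₀ := hgmem x₀ hx₀I
    have h1 : f x₀ - m/4 < f t := by linarith [hft.1]
    rw [hax₀, hbdef]
    simp only [mem_Icc] at hgx₀
    nlinarith [hgx₀.1, hgx₀.2]
  -- p₁ : point near 0 where Δ < 0
  have hcg : ContinuousWithinAt g (Icc 0 1) 0 := hgc 0 ⟨le_rfl, zero_le_one⟩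
  rw [Metric.continuousWithinAt_iff] at hcg
  obtain ⟨r₂, hr₂0, hr₂⟩ := hcg (m/(8*b)) (by positivity)
  obtain ⟨p₁, hp₁def⟩ : ∃ p : ℝ, p = min (r₂/2) (x₀/2) := ⟨_, rfl⟩
  have hp₁0 : 0 < p₁ := by rw [hp₁def]; exact lt_min (by linarith) (by linarith)
  have hp₁x₀ : p₁ < x₀ := by
    rw [hp₁def]
    have := min_le_right (r₂/2) (x₀/2)
    linarith
  have hp₁I : p₁ ∈ Icc (0:ℝ) 1 := ⟨hp₁0.le, by linarith⟩
  have hgp₁ : 1 - m/(8*b) < g p₁ := by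
    have hd : dist p₁ 0 < r₂ := by
      rw [Real.dist_eq, sub_zero, abs_of_pos hp₁0, hp₁def]
      have := min_le_left (r₂/2) (x₀/2)
      linarith
    have := hr₂ hp₁I hd
    rw [Real.dist_eq, hg0, abs_lt] at this
    linarith [this.1]
  have hΔp₁ : f (a * p₁) - b * g p₁ < 0 := by
    have hfp : f (a * p₁) ≤ 1 := by
      have hap : a * p₁ ∈ Icc (0:ℝ) 1 :=
        axmem ha0 (by rw [hℓeq]; exact lt_trans hp₁x₀ hx₀ℓ) p₁ hp₁0.le le_rfl
      exact (hfmem _ hap).2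
    have h9 : b * (1 - m/(8*b)) < b * g p₁ := mul_lt_mul_of_pos_left hgp₁ hb0
    have h10 : b * (1 - m/(8*b)) = b - m/8 := by field_simp
    have hbm : b - m/8 = 1 + m/8 := by rw [hbdef]; ring
    linarith
  -- p₃ : point near 1/a where Δ < 0
  have hginv0 : 0 < g (1/a) := by
    have h1 : (1/a : ℝ) ∈ Icc (0:ℝ) 1 := ⟨by positivity, hainv1.le⟩
    have := hgsa h1 ⟨zero_le_one, le_rfl⟩ hainv1
    rw [hg1] at this
    linarith
  have hcf1 : ContinuousWithinAt f (Icc 0 1) 1 := hfc 1 ⟨zero_le_one, le_rfl⟩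
  rw [Metric.continuousWithinAt_iff] at hcf1
  obtain ⟨r₃, hr₃0, hr₃⟩ := hcf1 (b * g (1/a)) (by positivity)
  obtain ⟨p₃, hp₃def⟩ : ∃ p : ℝ, p = 1/a - min (r₃/a) (1/a - x₀) / 2 := ⟨_, rfl⟩
  have hmin3 : 0 < min (r₃/a) (1/a - x₀) := lt_min (by positivity) (by linarith)
  have hp₃x₀ : x₀ < p₃ := by
    rw [hp₃def]
    have := min_le_right (r₃/a) (1/a - x₀)
    linarith
  have hp₃ℓ : p₃ < 1/a := by rw [hp₃def]; linarith
  have hp₃0 : 0 < p₃ := lt_trans hx₀0 hp₃x₀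
  have hap₃ : a * p₃ ∈ Icc (0:ℝ) 1 := axmem ha0 (by rw [hℓeq]; exact hp₃ℓ) p₃ hp₃0.le le_rfl
  have hfp₃ : f (a * p₃) < b * g (1/a) := by
    have hd : dist (a * p₃) 1 < r₃ := by
      rw [Real.dist_eq]
      have e1 : a * p₃ - 1 = -(a * (min (r₃/a) (1/a - x₀) / 2)) := by
        rw [hp₃def]
        field_simp
        ring
      rw [e1, abs_neg, abs_of_pos (by positivity)]
      have h2 : a * (min (r₃/a) (1/a - x₀) / 2) ≤ a * ((r₃/a) / 2) := by
        have := min_le_left (r₃/a) (1/a - x₀)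
        nlinarith
      have h3 : a * ((r₃/a)/2) = r₃/2 := by field_simp
      linarith
    have := hr₃ hap₃ hd
    rw [Real.dist_eq, hf1, sub_zero, abs_lt] at this
    linarith [this.2]
  have hΔp₃ : f (a * p₃) - b * g p₃ < 0 := by
    have hgp₃ : g (1/a) ≤ g p₃ :=
      hganti ⟨hp₃0.le, by linarith⟩ ⟨by positivity, hainv1.le⟩ hp₃ℓ.le
    nlinarith
  have hΔx₀' : 0 < f (a * x₀) - b * g x₀ := by linarith
  exact windows_two
    ⟨⟨⟨hfmem, hfanti, hf0, hfint⟩, hfc, hf1⟩, hfsa⟩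
    ⟨⟨⟨hgmem, hganti, hg0, hgint⟩, hgc, hg1⟩, hgsa⟩
    ha0 hb0 hp₁0 hp₁x₀ le_rfl hp₃x₀ (by rw [hℓeq]; exact hp₃ℓ)
    (mul_neg_of_neg_of_pos hΔp₁ hΔx₀')
    (mul_neg_of_pos_of_neg hΔx₀' hΔp₃)

set_option maxHeartbeats 1000000 in
private lemma upper_bound {f g : ℝ → ℝ} (fs gs : ℕ → ℝ → ℝ)
    (hfs : ∀ n, MemD (fs n)) (hgs : ∀ n, MemD (gs n))
    (hfconv : TendstoUniformlyOn fs f atTop (Icc 0 1))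
    (hgconv : TendstoUniformlyOn gs g atTop (Icc 0 1))
    (hdom : ∀ n, crossNum (fs n) (gs n) = 2) :
    crossNum f g ≤ 2 := by
  unfold crossNum
  refine iSup₂_le fun a ha => iSup₂_le fun b hb => ?_
  rw [mem_Ioi] at ha hb
  by_contra hcon
  have hcon3 : 2 < {p : ℝ × ℝ |
      SignSwitch (fun x => f (a * x) - b * g x) (min 1 (1/a)) p.1 p.2}.encard := by
    have := not_le.mp hcon
    unfold nSwitch at this
    exact this
  obtain ⟨P₁, P₂, P₃, hP1, hP2, hP3, h12, h13, h23⟩ := three_of_two_lt hcon3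
  obtain ⟨Q₁, Q₂, Q₃, hQ1, hQ2, hQ3, hQ12, hQ23⟩ := sort3 hP1 hP2 hP3 h12 h13 h23
  obtain ⟨hc1, hcd1, hd1ℓ, hz1, δ₁, hδ₁, hδ₁b, hp1⟩ := hQ1
  obtain ⟨hc2, hcd2, hd2ℓ, hz2, δ₂, hδ₂, hδ₂b, hp2⟩ := hQ2
  obtain ⟨hc3, hcd3, hd3ℓ, hz3, δ₃, hδ₃, hδ₃b, hp3⟩ := hQ3
  have hδ₁c : δ₁ ≤ Q₁.1 := le_trans hδ₁b (min_le_left _ _)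
  have hδ₂c : δ₂ ≤ Q₂.1 := le_trans hδ₂b (min_le_left _ _)
  have hδ₃c : δ₃ ≤ Q₃.1 := le_trans hδ₃b (min_le_left _ _)
  have hδ₃ℓ : δ₃ ≤ min 1 (1/a) - Q₃.2 := le_trans hδ₃b (min_le_right _ _)
  have hg12 : 0 < Q₂.1 - Q₁.2 := by linarith
  have hg23 : 0 < Q₃.1 - Q₂.2 := by linarith
  have hgm : 0 < min (Q₂.1 - Q₁.2) (Q₃.1 - Q₂.2) := lt_min hg12 hg23
  have hgm12 : min (Q₂.1 - Q₁.2) (Q₃.1 - Q₂.2) ≤ Q₂.1 - Q₁.2 := min_le_left _ _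
  have hgm23 : min (Q₂.1 - Q₁.2) (Q₃.1 - Q₂.2) ≤ Q₃.1 - Q₂.2 := min_le_right _ _
  obtain ⟨e₁, he₁def⟩ : ∃ e : ℝ,
    e = min (δ₁/2) (min (Q₂.1 - Q₁.2) (Q₃.1 - Q₂.2) / 3) := ⟨_, rfl⟩
  obtain ⟨e₂, he₂def⟩ : ∃ e : ℝ,
    e = min (δ₂/2) (min (Q₂.1 - Q₁.2) (Q₃.1 - Q₂.2) / 3) := ⟨_, rfl⟩
  obtain ⟨e₃, he₃def⟩ : ∃ e : ℝ,
    e = min (δ₃/2) (min (Q₂.1 - Q₁.2) (Q₃.1 - Q₂.2) / 3) := ⟨_, rfl⟩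
  have he₁0 : 0 < e₁ := by rw [he₁def]; exact lt_min (by linarith) (by linarith)
  have he₂0 : 0 < e₂ := by rw [he₂def]; exact lt_min (by linarith) (by linarith)
  have he₃0 : 0 < e₃ := by rw [he₃def]; exact lt_min (by linarith) (by linarith)
  have he₁a : e₁ ≤ δ₁/2 := by rw [he₁def]; exact min_le_left _ _
  have he₂a : e₂ ≤ δ₂/2 := by rw [he₂def]; exact min_le_left _ _
  have he₃a : e₃ ≤ δ₃/2 := by rw [he₃def]; exact min_le_left _ _
  have he₁g : e₁ ≤ min (Q₂.1 - Q₁.2) (Q₃.1 - Q₂.2) / 3 := by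
    rw [he₁def]; exact min_le_right _ _
  have he₂g : e₂ ≤ min (Q₂.1 - Q₁.2) (Q₃.1 - Q₂.2) / 3 := by
    rw [he₂def]; exact min_le_right _ _
  have he₃g : e₃ ≤ min (Q₂.1 - Q₁.2) (Q₃.1 - Q₂.2) / 3 := by
    rw [he₃def]; exact min_le_right _ _
  obtain ⟨u₁, hu₁⟩ : ∃ u : ℝ, u = Q₁.1 - e₁ := ⟨_, rfl⟩
  obtain ⟨v₁, hv₁⟩ : ∃ v : ℝ, v = Q₁.2 + e₁ := ⟨_, rfl⟩
  obtain ⟨u₂, hu₂⟩ : ∃ u : ℝ, u = Q₂.1 - e₂ := ⟨_, rfl⟩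
  obtain ⟨v₂, hv₂⟩ : ∃ v : ℝ, v = Q₂.2 + e₂ := ⟨_, rfl⟩
  obtain ⟨u₃, hu₃⟩ : ∃ u : ℝ, u = Q₃.1 - e₃ := ⟨_, rfl⟩
  obtain ⟨v₃, hv₃⟩ : ∃ v : ℝ, v = Q₃.2 + e₃ := ⟨_, rfl⟩
  have h0 : 0 < u₁ := by rw [hu₁]; linarith
  have h1 : u₁ < v₁ := by rw [hu₁, hv₁]; linarith
  have h2 : v₁ < u₂ := by rw [hv₁, hu₂]; linarith
  have h3 : u₂ < v₂ := by rw [hu₂, hv₂]; linarith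
  have h4 : v₂ < u₃ := by rw [hv₂, hu₃]; linarith
  have h5 : u₃ < v₃ := by rw [hu₃, hv₃]; linarith
  have h6 : v₃ < min 1 (1/a) := by rw [hv₃]; linarith
  have hℓ1 : min 1 (1/a) ≤ 1 := min_le_left _ _
  have hs1 : (f (a*u₁) - b*g u₁) * (f (a*v₁) - b*g v₁) < 0 := by
    rw [hu₁, hv₁]; exact hp1 e₁ he₁0 (by linarith)
  have hs2 : (f (a*u₂) - b*g u₂) * (f (a*v₂) - b*g v₂) < 0 := by
    rw [hu₂, hv₂]; exact hp2 e₂ he₂0 (by linarith)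
  have hs3 : (f (a*u₃) - b*g u₃) * (f (a*v₃) - b*g v₃) < 0 := by
    rw [hu₃, hv₃]; exact hp3 e₃ he₃0 (by linarith)
  -- margins
  have hne : ∀ {x y : ℝ}, x * y < 0 → x ≠ 0 ∧ y ≠ 0 := by
    intro x y hxy
    constructor <;> intro h <;> rw [h] at hxy <;> simp at hxy
  obtain ⟨M, hMdef⟩ : ∃ M : ℝ, M =
    min (min (min |f (a*u₁) - b*g u₁| |f (a*v₁) - b*g v₁|)
             (min |f (a*u₂) - b*g u₂| |f (a*v₂) - b*g v₂|))
        (min |f (a*u₃) - b*g u₃| |f (a*v₃) - b*g v₃|) := ⟨_, rfl⟩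
  have hM0 : 0 < M := by
    rw [hMdef]
    have e1 := hne hs1
    have e2 := hne hs2
    have e3 := hne hs3
    refine lt_min (lt_min (lt_min ?_ ?_) (lt_min ?_ ?_)) (lt_min ?_ ?_) <;> rw [abs_pos]
    exacts [e1.1, e1.2, e2.1, e2.2, e3.1, e3.2]
  have hMle : M ≤ |f (a*u₁) - b*g u₁| ∧ M ≤ |f (a*v₁) - b*g v₁|
      ∧ M ≤ |f (a*u₂) - b*g u₂| ∧ M ≤ |f (a*v₂) - b*g v₂|
      ∧ M ≤ |f (a*u₃) - b*g u₃| ∧ M ≤ |f (a*v₃) - b*g v₃| := by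
    rw [hMdef]
    refine ⟨?_, ?_, ?_, ?_, ?_, ?_⟩
    · exact le_trans (min_le_left _ _) (le_trans (min_le_left _ _) (min_le_left _ _))
    · exact le_trans (min_le_left _ _) (le_trans (min_le_left _ _) (min_le_right _ _))
    · exact le_trans (min_le_left _ _) (le_trans (min_le_right _ _) (min_le_left _ _))
    · exact le_trans (min_le_left _ _) (le_trans (min_le_right _ _) (min_le_right _ _))
    · exact le_trans (min_le_right _ _) (min_le_left _ _)
    · exact le_trans (min_le_right _ _) (min_le_right _ _)
  -- choose n
  obtain ⟨ε, hεdef⟩ : ∃ ε : ℝ, ε = M / (2 * (1 + b)) := ⟨_, rfl⟩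
  have hε0 : 0 < ε := by rw [hεdef]; positivity
  have hεM : ε + b * ε = M / 2 := by
    rw [hεdef]
    field_simp
  have huf := Metric.tendstoUniformlyOn_iff.mp hfconv ε hε0
  have hug := Metric.tendstoUniformlyOn_iff.mp hgconv ε hε0
  obtain ⟨n, hnf, hng⟩ := (huf.and hug).exists
  -- sign preservation at the six points
  have hpres : ∀ x : ℝ, 0 ≤ x → x ≤ v₃ → M ≤ |f (a*x) - b*g x| →
      0 < (f (a*x) - b*g x) * (fs n (a*x) - b*gs n x) := by
    intro x hx0 hxv hMx
    apply sgn_pres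
    have hxI : x ∈ Icc (0:ℝ) 1 := ⟨hx0, le_trans hxv (by linarith)⟩
    have haxI := axmem ha h6 x hx0 hxv
    have e1 := hnf (a*x) haxI
    have e2 := hng x hxI
    rw [Real.dist_eq] at e1 e2
    have e3 : (fs n (a*x) - b*gs n x) - (f (a*x) - b*g x)
        = (fs n (a*x) - f (a*x)) + (-(b * (gs n x - g x))) := by ring
    have e4 : |fs n (a*x) - f (a*x)| < ε := by
      rw [abs_sub_comm]; exact e1
    have e5 : |gs n x - g x| < ε := by
      rw [abs_sub_comm]; exact e2
    have e6 : |(fs n (a*x) - b*gs n x) - (f (a*x) - b*g x)|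
        ≤ |fs n (a*x) - f (a*x)| + b * |gs n x - g x| := by
      rw [e3]
      refine le_trans (abs_add_le _ _) ?_
      rw [abs_neg, abs_mul, abs_of_pos hb]
    have e7 : b * |gs n x - g x| ≤ b * ε := by
      apply mul_le_mul_of_nonneg_left e5.le hb.le
    calc |(fs n (a*x) - b*gs n x) - (f (a*x) - b*g x)|
        ≤ |fs n (a*x) - f (a*x)| + b * |gs n x - g x| := e6
      _ < ε + b * ε := by linarith
      _ = M / 2 := hεM
      _ < M := by linarith
      _ ≤ |f (a*x) - b*g x| := hMx
  have hsn1 : (fs n (a*u₁) - b*gs n u₁) * (fs n (a*v₁) - b*gs n v₁) < 0 :=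
    sgn_flip (hpres u₁ h0.le (by linarith) hMle.1)
      (hpres v₁ (by linarith) (by linarith) hMle.2.1) hs1
  have hsn2 : (fs n (a*u₂) - b*gs n u₂) * (fs n (a*v₂) - b*gs n v₂) < 0 :=
    sgn_flip (hpres u₂ (by linarith) (by linarith) hMle.2.2.1)
      (hpres v₂ (by linarith) (by linarith) hMle.2.2.2.1) hs2
  have hsn3 : (fs n (a*u₃) - b*gs n u₃) * (fs n (a*v₃) - b*gs n v₃) < 0 :=
    sgn_flip (hpres u₃ (by linarith) (by linarith) hMle.2.2.2.2.1)
      (hpres v₃ (by linarith) le_rfl hMle.2.2.2.2.2) hs3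
  have h3cross : 3 ≤ crossNum (fs n) (gs n) :=
    windows_three (hfs n) (hgs n) ha hb h0 h1 h2.le h3 h4.le h5 h6 hsn1 hsn2 hsn3
  rw [hdom n] at h3cross
  norm_num at h3cross

/-- domination is preserved under uniform limits: if `gₙ ◁ fₙ` and
`fₙ → f`, `gₙ → g` uniformly on `[0,1]`, then `f = g` or `g ◁ f`. -/
theorem stmt14 (f g : ℝ → ℝ) (fs gs : ℕ → ℝ → ℝ)
    (hf : MemD f) (hg : MemD g) (hfs : ∀ n, MemD (fs n)) (hgs : ∀ n, MemD (gs n))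
    (hfconv : TendstoUniformlyOn fs f atTop (Icc 0 1))
    (hgconv : TendstoUniformlyOn gs g atTop (Icc 0 1))
    (hdom : ∀ n, Dominates (fs n) (gs n)) :
    (∀ x ∈ Icc (0:ℝ) 1, f x = g x) ∨ Dominates f g := by
  have hle : ∀ x ∈ Icc (0:ℝ) 1, g x ≤ f x := by
    intro x hx
    have h1 : Tendsto (fun n => fs n x) atTop (nhds (f x)) := hfconv.tendsto_at hx
    have h2 : Tendsto (fun n => gs n x) atTop (nhds (g x)) := hgconv.tendsto_at hx
    exact le_of_tendsto_of_tendsto' h2 h1 (fun n => (hdom n).2 x hx)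
  by_cases hfg : ∀ x ∈ Icc (0:ℝ) 1, f x = g x
  · exact Or.inl hfg
  · right
    push_neg at hfg
    obtain ⟨x₀, hx₀I, hx₀ne⟩ := hfg
    refine ⟨le_antisymm ?_ ?_, hle⟩
    · exact upper_bound fs gs hfs hgs hfconv hgconv (fun n => (hdom n).1)
    · exact lower_bound hf hg hle hx₀I hx₀ne
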